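/- Let N ≥ 1, let S, R, C, U, V be constant N×N complex matrices, and let Ψ₀ : (0,1) → GL_N(ℂ) be smooth with y(1−y)Ψ₀'(y) = (S + yR)Ψ₀(y) on (0,1). Let a : (0,1) → ℂ be the smooth scalar function with a(y)I = (C − yU) − 2(S + yR), and set F(y) := −Ψ₀(y)^{−1}VΨ₀(y) − y(1−y)Ψ₀(y)^{−1}Ψ₀''(y) − a(y)Ψ₀(y)^{−1}Ψ₀'(y). For κ ≥ 0 let a^{(κ)} : (0,1) → ℂ, F^{(κ)} : (0,1) → M_N(ℂ) be smooth, let Q Ω^{(κ)} := y(1−y)Q'' + a^{(κ)}(y)Q' + Q F^{(κ)}(y), and let D^{(κ)} := Ψ₀ Ω^{(κ)} Ψ₀^{−1}. Then D^{(κ)} equals the operator P ↦ y(1−y)P'' + P'((C+κI) − y(U+2κI)) − P(V + κU + κ(κ−1)I) on smooth matrix-valued functions on (0,1) if and only if a^{(κ)}(y) = a(y) + κ(1−2y) and F^{(κ)}(y) = F(y) − κΨ₀(y)^{−1}(U + (κ−1)I)Ψ₀(y) − κ(1−2y)Ψ₀(y)^{−1}Ψ₀'(y) for all y ∈ (0,1).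 -/

import Mathlib

open Matrix Set

/-- Entrywise derivative of a matrix-valued function on `ℝ`. -/
noncomputable def mderiv {N : ℕ} (Q : ℝ → Matrix (Fin N) (Fin N) ℂ) :
    ℝ → Matrix (Fin N) (Fin N) ℂ :=
  fun y => Matrix.of fun i j => deriv (fun t => Q t i j) y

/-- The operator `Ω^{(κ)}` acting on the right:
`Q Ω^{(κ)} = y(1−y)Q'' + a^{(κ)}(y)Q' + Q F^{(κ)}(y)`. -/
noncomputable def OmegaOp {N : ℕ} (a : ℝ → ℂ) (F : ℝ → Matrix (Fin N) (Fin N) ℂ)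
    (Q : ℝ → Matrix (Fin N) (Fin N) ℂ) : ℝ → Matrix (Fin N) (Fin N) ℂ :=
  fun y =>
    ((y : ℂ) * (1 - (y : ℂ))) • mderiv (mderiv Q) y + a y • mderiv Q y + Q y * F y

/-- The conjugated operator `D^{(κ)} = Ψ₀ Ω^{(κ)} Ψ₀⁻¹`. -/
noncomputable def DconjOp {N : ℕ} (Ψ : ℝ → Matrix (Fin N) (Fin N) ℂ)
    (a : ℝ → ℂ) (F : ℝ → Matrix (Fin N) (Fin N) ℂ)
    (P : ℝ → Matrix (Fin N) (Fin N) ℂ) : ℝ → Matrix (Fin N) (Fin N) ℂ :=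
  fun y => OmegaOp a F (fun t => P t * Ψ t) y * (Ψ y)⁻¹

/-!
By the Leibniz rule, `(PΨ₀)Ω^{(κ)}Ψ₀⁻¹ = y(1−y)P'' + P'(a^{(κ)} + 2y(1−y)Ψ₀'Ψ₀⁻¹) + P(Ψ₀Ω^{(κ)})Ψ₀⁻¹`,
and the differential equation turns `y(1−y)Ψ₀'Ψ₀⁻¹` into `S + yR`. So `D^{(κ)}` is again a
second order operator with leading coefficient `y(1−y)`. Two such operators agree on all smooth
`P` iff their first and zeroth order coefficients agree, as testing on `P = 1` and `P = y` shows.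
With the definitions of `a` and `F`, the comparison of coefficients becomes the two stated
conditions.
-/

section Calculus

variable {N : ℕ}

def EntrywiseSmoothOn (Q : ℝ → Matrix (Fin N) (Fin N) ℂ) (s : Set ℝ) : Prop :=
  ∀ i j, ContDiffOn ℝ (⊤ : ℕ∞) (fun t => Q t i j) s

variable {P Q : ℝ → Matrix (Fin N) (Fin N) ℂ} {s : Set ℝ} {y : ℝ}

lemma EntrywiseSmoothOn.differentiableAt (hQ : EntrywiseSmoothOn Q s) (hs : IsOpen s)
    (hy : y ∈ s) (i j : Fin N) : DifferentiableAt ℝ (fun t => Q t i j) y :=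
  ((hQ i j).contDiffAt (hs.mem_nhds hy)).differentiableAt (by simp)

lemma entrywiseSmoothOn_mderiv (hQ : EntrywiseSmoothOn Q s) (hs : IsOpen s) :
    EntrywiseSmoothOn (mderiv Q) s := fun i j =>
  (hQ i j).deriv_of_isOpen hs (by simp)

lemma differentiableAt_mul_apply (hP : ∀ i j, DifferentiableAt ℝ (fun t => P t i j) y)
    (hQ : ∀ i j, DifferentiableAt ℝ (fun t => Q t i j) y) (i j : Fin N) :
    DifferentiableAt ℝ (fun t => (P t * Q t) i j) y := by
  simp only [Matrix.mul_apply]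
  exact DifferentiableAt.fun_sum fun k _ => (hP i k).mul (hQ k j)

lemma mderiv_add (hP : ∀ i j, DifferentiableAt ℝ (fun t => P t i j) y)
    (hQ : ∀ i j, DifferentiableAt ℝ (fun t => Q t i j) y) :
    mderiv (fun t => P t + Q t) y = mderiv P y + mderiv Q y := by
  ext i j
  exact deriv_add (hP i j) (hQ i j)

lemma mderiv_mul (hP : ∀ i j, DifferentiableAt ℝ (fun t => P t i j) y)
    (hQ : ∀ i j, DifferentiableAt ℝ (fun t => Q t i j) y) :
    mderiv (fun t => P t * Q t) y = mderiv P y * Q y + P y * mderiv Q y := by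
  ext i j
  simp only [mderiv, Matrix.of_apply, Matrix.add_apply, Matrix.mul_apply]
  rw [deriv_fun_sum fun k _ => (hP i k).fun_mul (hQ k j), ← Finset.sum_add_distrib]
  exact Finset.sum_congr rfl fun k _ => deriv_fun_mul (hP i k) (hQ k j)

lemma mderiv_mderiv_mul (hP : EntrywiseSmoothOn P s) (hQ : EntrywiseSmoothOn Q s)
    (hs : IsOpen s) (hy : y ∈ s) :
    mderiv (mderiv (fun t => P t * Q t)) y
      = mderiv (mderiv P) y * Q y + (2 : ℂ) • (mderiv P y * mderiv Q y)
        + P y * mderiv (mderiv Q) y := by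
  have hP' := entrywiseSmoothOn_mderiv hP hs
  have hQ' := entrywiseSmoothOn_mderiv hQ hs
  have hfirst : mderiv (mderiv (fun t => P t * Q t)) y
      = mderiv (fun t => mderiv P t * Q t + P t * mderiv Q t) y := by
    ext i j
    refine Filter.EventuallyEq.deriv_eq ?_
    filter_upwards [hs.mem_nhds hy] with t ht
    rw [mderiv_mul (hP.differentiableAt hs ht) (hQ.differentiableAt hs ht)]
  rw [hfirst, mderiv_add (differentiableAt_mul_apply (hP'.differentiableAt hs hy)
      (hQ.differentiableAt hs hy)) (differentiableAt_mul_apply (hP.differentiableAt hs hy)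
      (hQ'.differentiableAt hs hy)),
    mderiv_mul (hP'.differentiableAt hs hy) (hQ.differentiableAt hs hy),
    mderiv_mul (hP.differentiableAt hs hy) (hQ'.differentiableAt hs hy)]
  module

lemma mderiv_const (M : Matrix (Fin N) (Fin N) ℂ) : mderiv (fun _ : ℝ => M) = fun _ => 0 := by
  funext y; ext i j; simp [mderiv]

lemma mderiv_ofReal_smul (M : Matrix (Fin N) (Fin N) ℂ) :
    mderiv (fun t : ℝ => (t : ℂ) • M) = fun _ => M := by
  funext y; ext i j
  simp only [mderiv, Matrix.of_apply, Matrix.smul_apply, smul_eq_mul]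
  exact ((Complex.ofRealCLM.hasDerivAt (x := y)).mul_const _).deriv.trans (one_mul _)

lemma entrywiseSmoothOn_const (M : Matrix (Fin N) (Fin N) ℂ) :
    EntrywiseSmoothOn (fun _ => M) s := fun _ _ => contDiffOn_const

lemma entrywiseSmoothOn_ofReal_smul (M : Matrix (Fin N) (Fin N) ℂ) :
    EntrywiseSmoothOn (fun t : ℝ => (t : ℂ) • M) s := fun i j => by
  simp only [Matrix.smul_apply, smul_eq_mul]
  exact Complex.ofRealCLM.contDiff.contDiffOn.mul contDiffOn_const

end Calculus

section Operator

variable {N : ℕ} {s : Set ℝ}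

lemma DconjOp_eq {Ψ P : ℝ → Matrix (Fin N) (Fin N) ℂ} {a : ℝ → ℂ}
    {F : ℝ → Matrix (Fin N) (Fin N) ℂ} {A : Matrix (Fin N) (Fin N) ℂ} {y : ℝ}
    (hΨ : EntrywiseSmoothOn Ψ s) (hP : EntrywiseSmoothOn P s) (hs : IsOpen s) (hy : y ∈ s)
    (hΨinv : IsUnit (Ψ y))
    (hΨode : ((y : ℂ) * (1 - (y : ℂ))) • mderiv Ψ y = A * Ψ y) :
    DconjOp Ψ a F P y
      = ((y : ℂ) * (1 - (y : ℂ))) • mderiv (mderiv P) y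
        + mderiv P y * (a y • (1 : Matrix (Fin N) (Fin N) ℂ) + (2 : ℂ) • A)
        + P y * (OmegaOp a F Ψ y * (Ψ y)⁻¹) := by
  have hinv : Ψ y * (Ψ y)⁻¹ = 1 :=
    Matrix.mul_nonsing_inv _ ((Matrix.isUnit_iff_isUnit_det _).1 hΨinv)
  have hcross : ((y : ℂ) * (1 - (y : ℂ))) • (mderiv P y * mderiv Ψ y)
      = mderiv P y * A * Ψ y := by
    rw [← mul_smul_comm, hΨode, mul_assoc]
  simp only [DconjOp, OmegaOp]
  rw [mderiv_mul (hP.differentiableAt hs hy) (hΨ.differentiableAt hs hy),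
    mderiv_mderiv_mul hP hΨ hs hy, smul_add, smul_add, smul_comm _ (2 : ℂ), hcross]
  simp only [add_mul, mul_add, smul_mul_assoc, mul_smul_comm, mul_assoc, hinv, mul_one]
  module

lemma secondOrder_eq_iff {L : (ℝ → Matrix (Fin N) (Fin N) ℂ) → ℝ → Matrix (Fin N) (Fin N) ℂ}
    {z : ℝ → ℂ} {A B A' B' : ℝ → Matrix (Fin N) (Fin N) ℂ}
    (hL : ∀ P, EntrywiseSmoothOn P s → ∀ y ∈ s,
      L P y = z y • mderiv (mderiv P) y + mderiv P y * A y + P y * B y) :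
    (∀ P, EntrywiseSmoothOn P s → ∀ y ∈ s,
      L P y = z y • mderiv (mderiv P) y + mderiv P y * A' y - P y * B' y)
    ↔ ∀ y ∈ s, A y = A' y ∧ B y = -B' y := by
  constructor
  · intro h y hy
    have hone := h _ (entrywiseSmoothOn_const 1) y hy
    have hid := h _ (entrywiseSmoothOn_ofReal_smul 1) y hy
    rw [hL _ (entrywiseSmoothOn_const 1) y hy] at hone
    rw [hL _ (entrywiseSmoothOn_ofReal_smul 1) y hy] at hid
    simp only [mderiv_const, mderiv_ofReal_smul, smul_zero, zero_mul, one_mul, zero_add,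
      zero_sub, smul_mul_assoc] at hone hid
    refine ⟨?_, hone⟩
    rw [hone, smul_neg, ← sub_eq_add_neg] at hid
    exact sub_left_injective hid
  · intro h P hP y hy
    rw [hL P hP y hy, (h y hy).1, (h y hy).2, mul_neg, ← sub_eq_add_neg]

end Operator

section Coefficients

variable {n : Type*} [Fintype n] [DecidableEq n]

lemma firstOrderCoeff_eq_iff [Nonempty n] {c a y κ : ℂ} {A C U : Matrix n n ℂ}
    (ha : a • (1 : Matrix n n ℂ) = (C - y • U) - (2 : ℂ) • A) :
    c • (1 : Matrix n n ℂ) + (2 : ℂ) • A = (C + κ • 1) - y • (U + (2 * κ) • 1)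
      ↔ c = a + κ * (1 - 2 * y) := by
  have hrhs : (C + κ • 1) - y • (U + (2 * κ) • 1)
      = (a + κ * (1 - 2 * y)) • (1 : Matrix n n ℂ) + (2 : ℂ) • A := by
    rw [add_smul, ha]
    module
  rw [hrhs, add_left_inj]
  exact (smul_left_injective ℂ one_ne_zero).eq_iff

lemma zerothOrderCoeff_eq_iff {Ψ₀ Ψ₁ Ψ₂ U V F X : Matrix n n ℂ} {z a c κ y : ℂ}
    (hΨ₀ : IsUnit Ψ₀)
    (hF : F = -(Ψ₀⁻¹ * V * Ψ₀) - z • (Ψ₀⁻¹ * Ψ₂) - a • (Ψ₀⁻¹ * Ψ₁))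
    (hc : c = a + κ * (1 - 2 * y)) :
    (z • Ψ₂ + c • Ψ₁ + Ψ₀ * X) * Ψ₀⁻¹ = -(V + κ • U + (κ * (κ - 1)) • 1)
      ↔ X = F - κ • (Ψ₀⁻¹ * (U + (κ - 1) • 1) * Ψ₀) - (κ * (1 - 2 * y)) • (Ψ₀⁻¹ * Ψ₁) := by
  obtain ⟨_⟩ := hΨ₀.nonempty_invertible
  have hrhs : Ψ₀⁻¹ * (-(V + κ • U + (κ * (κ - 1)) • 1) * Ψ₀ - (z • Ψ₂ + c • Ψ₁))
      = F - κ • (Ψ₀⁻¹ * (U + (κ - 1) • 1) * Ψ₀) - (κ * (1 - 2 * y)) • (Ψ₀⁻¹ * Ψ₁) := by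
    rw [hF, hc]
    simp only [mul_sub, mul_add, add_mul, neg_mul, mul_neg, smul_mul_assoc, mul_smul_comm,
      mul_assoc, Matrix.inv_mul_of_invertible, one_mul, mul_one]
    module
  rw [mul_inv_eq_iff_eq_mul_of_invertible, add_comm, ← eq_sub_iff_add_eq,
    ← hrhs, eq_comm (a := X), inv_mul_eq_iff_eq_mul_of_invertible, eq_comm]

end Coefficients

theorem stmt3_general {N : ℕ} (hN : 1 ≤ N) (S R C U V : Matrix (Fin N) (Fin N) ℂ)
    (Ψ : ℝ → Matrix (Fin N) (Fin N) ℂ)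
    (hΨsmooth : ∀ i j, ContDiffOn ℝ (⊤ : ℕ∞) (fun t => Ψ t i j) (Set.Ioo 0 1))
    (hΨinv : ∀ y ∈ Set.Ioo (0:ℝ) 1, IsUnit (Ψ y))
    (hΨode : ∀ y ∈ Set.Ioo (0:ℝ) 1,
      ((y : ℂ) * (1 - (y : ℂ))) • mderiv Ψ y = (S + (y : ℂ) • R) * Ψ y)
    (a : ℝ → ℂ)
    (ha : ∀ y ∈ Set.Ioo (0:ℝ) 1,
      a y • (1 : Matrix (Fin N) (Fin N) ℂ)
        = (C - (y : ℂ) • U) - (2 : ℂ) • (S + (y : ℂ) • R))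
    (F : ℝ → Matrix (Fin N) (Fin N) ℂ)
    (hFdef : ∀ y ∈ Set.Ioo (0:ℝ) 1,
      F y = -((Ψ y)⁻¹ * V * Ψ y)
        - ((y : ℂ) * (1 - (y : ℂ))) • ((Ψ y)⁻¹ * mderiv (mderiv Ψ) y)
        - a y • ((Ψ y)⁻¹ * mderiv Ψ y))
    (κ : ℝ)
    (aκ : ℝ → ℂ) (Fκ : ℝ → Matrix (Fin N) (Fin N) ℂ) :
    (∀ P : ℝ → Matrix (Fin N) (Fin N) ℂ,
      (∀ i j, ContDiffOn ℝ (⊤ : ℕ∞) (fun t => P t i j) (Set.Ioo 0 1)) →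
      ∀ y ∈ Set.Ioo (0:ℝ) 1,
        DconjOp Ψ aκ Fκ P y =
          ((y : ℂ) * (1 - (y : ℂ))) • mderiv (mderiv P) y
            + mderiv P y * ((C + (κ : ℂ) • (1 : Matrix (Fin N) (Fin N) ℂ))
                - (y : ℂ) • (U + (2 * (κ : ℂ)) • (1 : Matrix (Fin N) (Fin N) ℂ)))
            - P y * (V + (κ : ℂ) • U
                + ((κ : ℂ) * ((κ : ℂ) - 1)) • (1 : Matrix (Fin N) (Fin N) ℂ)))
    ↔
    (∀ y ∈ Set.Ioo (0:ℝ) 1,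
      aκ y = a y + (κ : ℂ) * (1 - 2 * (y : ℂ))
      ∧ Fκ y = F y
          - (κ : ℂ) • ((Ψ y)⁻¹ * (U + ((κ : ℂ) - 1) • (1 : Matrix (Fin N) (Fin N) ℂ)) * Ψ y)
          - ((κ : ℂ) * (1 - 2 * (y : ℂ))) • ((Ψ y)⁻¹ * mderiv Ψ y)) := by
  have : Nonempty (Fin N) := ⟨⟨0, hN⟩⟩
  have hD : ∀ P, EntrywiseSmoothOn P (Ioo 0 1) → ∀ y ∈ Ioo (0 : ℝ) 1,
      DconjOp Ψ aκ Fκ P y = ((y : ℂ) * (1 - (y : ℂ))) • mderiv (mderiv P) y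
        + mderiv P y * (aκ y • (1 : Matrix (Fin N) (Fin N) ℂ) + (2 : ℂ) • (S + (y : ℂ) • R))
        + P y * (OmegaOp aκ Fκ Ψ y * (Ψ y)⁻¹) := fun P hP y hy =>
    DconjOp_eq hΨsmooth hP isOpen_Ioo hy (hΨinv y hy) (hΨode y hy)
  refine (secondOrder_eq_iff hD).trans (forall₂_congr fun y hy => ?_)
  rw [firstOrderCoeff_eq_iff (ha y hy)]
  exact and_congr_right fun haκ => zerothOrderCoeff_eq_iff (hΨinv y hy) (hFdef y hy) haκ

/-- `D^{(κ)} = Ψ₀ Ω^{(κ)} Ψ₀⁻¹` equals the deformed hypergeometric operator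
`P ↦ y(1−y)P'' + P'((C+κI) − y(U+2κI)) − P(V + κU + κ(κ−1)I)` if and only if
`a^{(κ)}(y) = a(y) + κ(1−2y)` and
`F^{(κ)}(y) = F(y) − κΨ₀⁻¹(U + (κ−1)I)Ψ₀ − κ(1−2y)Ψ₀⁻¹Ψ₀'`. -/
theorem stmt3 {N : ℕ} (hN : 1 ≤ N) (S R C U V : Matrix (Fin N) (Fin N) ℂ)
    (Ψ : ℝ → Matrix (Fin N) (Fin N) ℂ)
    (hΨsmooth : ∀ i j, ContDiffOn ℝ (⊤ : ℕ∞) (fun t => Ψ t i j) (Set.Ioo 0 1))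
    (hΨinv : ∀ y ∈ Set.Ioo (0:ℝ) 1, IsUnit (Ψ y))
    (hΨode : ∀ y ∈ Set.Ioo (0:ℝ) 1,
      ((y : ℂ) * (1 - (y : ℂ))) • mderiv Ψ y = (S + (y : ℂ) • R) * Ψ y)
    (a : ℝ → ℂ)
    (ha : ∀ y ∈ Set.Ioo (0:ℝ) 1,
      a y • (1 : Matrix (Fin N) (Fin N) ℂ)
        = (C - (y : ℂ) • U) - (2 : ℂ) • (S + (y : ℂ) • R))
    (F : ℝ → Matrix (Fin N) (Fin N) ℂ)
    (hFdef : ∀ y ∈ Set.Ioo (0:ℝ) 1,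
      F y = -((Ψ y)⁻¹ * V * Ψ y)
        - ((y : ℂ) * (1 - (y : ℂ))) • ((Ψ y)⁻¹ * mderiv (mderiv Ψ) y)
        - a y • ((Ψ y)⁻¹ * mderiv Ψ y))
    (κ : ℝ) (hκ : 0 ≤ κ)
    (aκ : ℝ → ℂ) (Fκ : ℝ → Matrix (Fin N) (Fin N) ℂ)
    (haκ : ContDiffOn ℝ (⊤ : ℕ∞) aκ (Set.Ioo 0 1))
    (hFκ : ∀ i j, ContDiffOn ℝ (⊤ : ℕ∞) (fun t => Fκ t i j) (Set.Ioo 0 1)) :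
    (∀ P : ℝ → Matrix (Fin N) (Fin N) ℂ,
      (∀ i j, ContDiffOn ℝ (⊤ : ℕ∞) (fun t => P t i j) (Set.Ioo 0 1)) →
      ∀ y ∈ Set.Ioo (0:ℝ) 1,
        DconjOp Ψ aκ Fκ P y =
          ((y : ℂ) * (1 - (y : ℂ))) • mderiv (mderiv P) y
            + mderiv P y * ((C + (κ : ℂ) • (1 : Matrix (Fin N) (Fin N) ℂ))
                - (y : ℂ) • (U + (2 * (κ : ℂ)) • (1 : Matrix (Fin N) (Fin N) ℂ)))
            - P y * (V + (κ : ℂ) • U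
                + ((κ : ℂ) * ((κ : ℂ) - 1)) • (1 : Matrix (Fin N) (Fin N) ℂ)))
    ↔
    (∀ y ∈ Set.Ioo (0:ℝ) 1,
      aκ y = a y + (κ : ℂ) * (1 - 2 * (y : ℂ))
      ∧ Fκ y = F y
          - (κ : ℂ) • ((Ψ y)⁻¹ * (U + ((κ : ℂ) - 1) • (1 : Matrix (Fin N) (Fin N) ℂ)) * Ψ y)
          - ((κ : ℂ) * (1 - 2 * (y : ℂ))) • ((Ψ y)⁻¹ * mderiv Ψ y)) :=
  stmt3_general hN S R C U V Ψ hΨsmooth hΨinv hΨode a ha F hFdef κ aκ Fκ
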